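/- arXiv:1212.2549 — 2 statements merged into one kernel-verified Lean document; each statement's English description precedes it below -/
import Mathlib

section
/- If c = 2^j · w with w odd and k > j, then the Fermat number F_k = 2^(2^k) + 1 does not divide 2^c + 1. -/
/-- The `k`-th Fermat number `F k = 2^(2^k) + 1`. -/
def F (k : ℕ) : ℕ := 2 ^ (2 ^ k) + 1

theorem fermat_not_dvd_of_gt (j k w : ℕ) (hw : Odd w) (hjk : j < k) :
    ¬ F k ∣ 2 ^ (2 ^ j * w) + 1 := by
  intro h
  have h1 : (2 : ZMod (F k)) ^ (2 ^ j * w) = -1 := by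
    have h0 : ((2 ^ (2 ^ j * w) + 1 : ℕ) : ZMod (F k)) = 0 :=
      (ZMod.natCast_eq_zero_iff _ _).mpr h
    push_cast at h0
    linear_combination h0
  have h2 : (2 : ZMod (F k)) ^ (2 ^ k) = -1 := by
    have h0 : ((2 ^ (2 ^ k) + 1 : ℕ) : ZMod (F k)) = 0 :=
      (ZMod.natCast_eq_zero_iff _ _).mpr dvd_rfl
    push_cast at h0
    linear_combination h0
  have hexp : 2 ^ k * w = 2 ^ j * w * 2 ^ (k - j) := by
    rw [mul_comm (2 ^ j * w), ← mul_assoc, ← pow_add]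
    rw [Nat.sub_add_cancel hjk.le]
  have hA : (2 : ZMod (F k)) ^ (2 ^ k * w) = -1 := by
    rw [pow_mul, h2, hw.neg_one_pow]
  have hB : (2 : ZMod (F k)) ^ (2 ^ k * w) = 1 := by
    rw [hexp, pow_mul, h1]
    exact Even.neg_one_pow (by
      have : 1 ≤ k - j := by omega
      exact (Nat.even_pow).mpr ⟨even_two, by omega⟩)
  have hcontra : ((2 : ℕ) : ZMod (F k)) = 0 := by
    push_cast
    linear_combination hA - hB
  have hdvd : F k ∣ 2 := (ZMod.natCast_eq_zero_iff _ _).mp hcontra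
  have hle : F k ≤ 2 := Nat.le_of_dvd (by norm_num) hdvd
  have : 3 ≤ F k := by
    unfold F
    have : 2 ^ 1 ≤ 2 ^ 2 ^ k := Nat.pow_le_pow_right (by norm_num) (Nat.one_le_two_pow)
    omega
  omega
end

section
/- For every constant d > 1 and sufficiently large n, the number of integers z in [2^n, 2^(n+1)) computable by a straight-line program of length at most n/(3d·log₂ n) is at most 2^(n/d); hence at least 2^n·(1 − 2^(−(1−1/d)n)) integers in this interval require straight-line programs of length greater than n/(3d·log₂ n). -/
/-! A straight-line program of length `L` is described by choosing, for each of its `L` steps,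
two earlier registers and one of three operations, so at most `(3L²)^L ≤ n^(3L) = 2^(3L log₂ n)`
integers are computable with length `L ≤ n`. With `L ≤ n / (3d log₂ n)` this is at most
`2^(n/d)`, and all other integers of `[2^n, 2^(n+1))` need longer programs. -/

/-- `Computes l z` : there is a straight-line program of length `l` over
`{+, −, ×}`, starting from the constant `1`, whose final register equals `z`. -/
def Computes (l : ℕ) (z : ℤ) : Prop :=
  ∃ a : ℕ → ℤ, a 0 = 1 ∧
    (∀ i, 1 ≤ i → i ≤ l → ∃ j k, j < i ∧ k < i ∧
      (a i = a j + a k ∨ a i = a j * a k ∨ a i = a j - a k)) ∧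
    a l = z

theorem three_mul_sq_pow_le_two_rpow {n L : ℕ} (hn : 3 ≤ n) (hL : L ≤ n) :
    ((3 * L ^ 2) ^ L : ℝ) ≤ 2 ^ (3 * L * Real.logb 2 n) := by
  have hn0 : (0 : ℝ) < n := by positivity
  have hnL : (L : ℝ) ≤ n := by exact_mod_cast hL
  calc ((3 * L ^ 2) ^ L : ℝ) ≤ ((n : ℝ) ^ 3) ^ L := by
        gcongr
        calc (3 * L ^ 2 : ℝ) ≤ n * n ^ 2 := by gcongr; exact_mod_cast hn
          _ = n ^ 3 := by ring
    _ = 2 ^ (3 * L * Real.logb 2 n) := by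
        rw [mul_comm, Real.rpow_mul zero_le_two, Real.rpow_logb two_pos (by norm_num) hn0,
          ← pow_mul, ← Real.rpow_natCast]
        norm_cast

theorem ncard_Ico_two_pow (n : ℕ) : (Set.Ico (2 ^ n : ℤ) (2 ^ (n + 1))).ncard = 2 ^ n := by
  rw [← Finset.coe_Ico, Set.ncard_coe_finset, Int.card_Ico, pow_succ, mul_two,
    add_sub_cancel_left]
  exact_mod_cast Int.toNat_natCast (2 ^ n)

theorem two_pow_mul_one_sub_rpow {d : ℝ} (hd : d ≠ 0) (n : ℕ) :
    (2 ^ n : ℝ) * (1 - 2 ^ (-(1 - 1 / d) * n)) = 2 ^ n - 2 ^ ((n : ℝ) / d) := by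
  rw [mul_sub, mul_one, ← Real.rpow_natCast, ← Real.rpow_add two_pos]
  congr 2
  field_simp
  ring

theorem Computes.mono {l L : ℕ} {z : ℤ} (h : Computes l z) (hlL : l ≤ L) : Computes L z := by
  obtain ⟨a, h0, hstep, rfl⟩ := h
  refine ⟨fun i => if i ≤ l then a i else a l, by simp [h0], fun i hi hiL => ?_, ?_⟩
  swap
  · show (if L ≤ l then a L else a l) = a l
    split_ifs with hLl
    · rw [le_antisymm hLl hlL]
    · rfl
  by_cases hil : i ≤ l
  · obtain ⟨j, k, hj, hk, hop⟩ := hstep i hi hil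
    exact ⟨j, k, hj, hk, by simpa [hil, hj.le.trans hil, hk.le.trans hil] using hop⟩
  · -- once the program has ended, keep multiplying the last register by `a 0 = 1`
    exact ⟨l, 0, by omega, by omega, Or.inr (Or.inl (by simp [hil, h0]))⟩

namespace StraightLine

def applyOp : Fin 3 → ℤ → ℤ → ℤ
  | 0 => (· + ·)
  | 1 => (· * ·)
  | 2 => (· - ·)

theorem exists_applyOp_iff {x y z : ℤ} :
    (∃ o, x = applyOp o y z) ↔ (x = y + z ∨ x = y * z ∨ x = y - z) := by
  constructor
  · rintro ⟨o, rfl⟩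
    fin_cases o <;> simp [applyOp]
  · rintro (h | h | h)
    exacts [⟨0, h⟩, ⟨1, h⟩, ⟨2, h⟩]

/-- Instruction `i` of a program computes register `i + 1` from two earlier registers. -/
abbrev Program (L : ℕ) := Fin L → Fin L × Fin L × Fin 3

/-- Operand indices are clamped to `i` to make the recursion well founded; on programs built
from a `Computes` witness the clamp is never active. -/
def reg {L : ℕ} (p : Program L) : ℕ → ℤ
  | 0 => 1
  | i + 1 =>
    if h : i < L then
      applyOp (p ⟨i, h⟩).2.2 (reg p (min (p ⟨i, h⟩).1 i)) (reg p (min (p ⟨i, h⟩).2.1 i))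
    else 0
decreasing_by all_goals omega

theorem exists_program_of_computes {L : ℕ} {z : ℤ} (h : Computes L z) :
    ∃ p : Program L, reg p L = z := by
  obtain ⟨a, h0, hstep, rfl⟩ := h
  have hins : ∀ i : Fin L, ∃ ins : Fin L × Fin L × Fin 3,
      (ins.1 : ℕ) ≤ i ∧ (ins.2.1 : ℕ) ≤ i ∧
        a (i + 1) = applyOp ins.2.2 (a ins.1) (a ins.2.1) := by
    intro i
    obtain ⟨j, k, hj, hk, hop⟩ := hstep (i + 1) (by omega) i.isLt
    obtain ⟨o, ho⟩ := exists_applyOp_iff.mpr hop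
    exact ⟨(⟨j, by omega⟩, ⟨k, by omega⟩, o), Nat.le_of_lt_succ hj, Nat.le_of_lt_succ hk,
      ho⟩
  choose p hpj hpk hpa using hins
  refine ⟨p, ?_⟩
  suffices ∀ i ≤ L, reg p i = a i from this L le_rfl
  intro i
  induction i using Nat.strong_induction_on with
  | _ i ih =>
    rcases i with _ | i
    · simp [reg, h0]
    · intro hi
      replace hi : i < L := hi
      have hj := hpj ⟨i, hi⟩
      have hk := hpk ⟨i, hi⟩
      rw [reg, dif_pos hi, min_eq_left hj, min_eq_left hk,
        ih _ (Nat.lt_succ_of_le hj) (hj.trans hi.le), ih _ (Nat.lt_succ_of_le hk) (hk.trans hi.le),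
        hpa ⟨i, hi⟩]

theorem finite_setOf_computes (L : ℕ) : {z | Computes L z}.Finite :=
  (Set.finite_range fun p : Program L => reg p L).subset fun _ => exists_program_of_computes

theorem ncard_setOf_computes_le (L : ℕ) : {z | Computes L z}.ncard ≤ (3 * L ^ 2) ^ L :=
  calc {z | Computes L z}.ncard
      ≤ (Set.range fun p : Program L => reg p L).ncard :=
        Set.ncard_le_ncard (fun _ => exists_program_of_computes) (Set.finite_range _)
    _ ≤ Nat.card (Program L) := Finite.card_range_le _
    _ = (3 * L ^ 2) ^ L := by simp [Program]; ring

def computableWithin (B : ℝ) : Set ℤ := {z | ∃ l : ℕ, (l : ℝ) ≤ B ∧ Computes l z}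

theorem computableWithin_subset (B : ℝ) : computableWithin B ⊆ {z | Computes ⌊B⌋₊ z} :=
  fun _ ⟨_, hl, h⟩ => h.mono (Nat.le_floor hl)

theorem finite_computableWithin (B : ℝ) : (computableWithin B).Finite :=
  (finite_setOf_computes _).subset (computableWithin_subset B)

theorem ncard_computableWithin_le {n : ℕ} {B : ℝ} (hn : 3 ≤ n) (hB0 : 0 ≤ B)
    (hBn : B ≤ n) :
    ((computableWithin B).ncard : ℝ) ≤ 2 ^ (3 * B * Real.logb 2 n) := by
  set L := ⌊B⌋₊
  have hLn : L ≤ n := Nat.floor_le_of_le hBn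
  have hlog : 0 ≤ Real.logb 2 n := Real.logb_nonneg one_lt_two (by norm_cast; omega)
  calc ((computableWithin B).ncard : ℝ) ≤ ((3 * L ^ 2) ^ L : ℕ) := by
        exact_mod_cast (Set.ncard_le_ncard (computableWithin_subset B)
          (finite_setOf_computes L)).trans (ncard_setOf_computes_le L)
    _ ≤ 2 ^ (3 * L * Real.logb 2 n) := by
        push_cast
        exact three_mul_sq_pow_le_two_rpow hn hLn
    _ ≤ 2 ^ (3 * B * Real.logb 2 n) := by
        gcongr
        · exact one_le_two
        · exact Nat.floor_le hB0

end StraightLine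

open StraightLine in
theorem almost_all_hard (d : ℝ) (hd : 1 < d) :
    ∃ N : ℕ, ∀ n : ℕ, N ≤ n →
      (({z : ℤ | 2 ^ n ≤ z ∧ z < 2 ^ (n + 1) ∧
          ∃ l : ℕ, (l : ℝ) ≤ n / (3 * d * Real.logb 2 n) ∧ Computes l z}.ncard : ℝ)
        ≤ 2 ^ ((n : ℝ) / d)) ∧
      ((2 ^ n : ℝ) * (1 - 2 ^ (-(1 - 1 / d) * n)) ≤
        ({z : ℤ | 2 ^ n ≤ z ∧ z < 2 ^ (n + 1) ∧
          ∀ l : ℕ, Computes l z → (n : ℝ) / (3 * d * Real.logb 2 n) < l}.ncard : ℝ)) := by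
  refine ⟨3, fun n hn => ?_⟩
  have hlog : 1 ≤ Real.logb 2 n := by
    rw [← Real.logb_self_eq_one one_lt_two]
    exact Real.logb_le_logb_of_le one_lt_two zero_lt_two (by exact_mod_cast (by omega : 2 ≤ n))
  set B := (n : ℝ) / (3 * d * Real.logb 2 n)
  have hB0 : 0 ≤ B := by positivity
  have hBn : B ≤ n := div_le_self (Nat.cast_nonneg n) (by nlinarith)
  have hexp : 3 * B * Real.logb 2 n = n / d := by simp only [B]; field_simp
  set easy := {z : ℤ | 2 ^ n ≤ z ∧ z < 2 ^ (n + 1) ∧ z ∈ computableWithin B}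
  have h_easy : (easy.ncard : ℝ) ≤ 2 ^ ((n : ℝ) / d) := hexp ▸
    (Nat.cast_le.mpr (Set.ncard_le_ncard (fun z hz => hz.2.2) (finite_computableWithin B))).trans
      (ncard_computableWithin_le hn hB0 hBn)
  have h_hard :
      {z : ℤ | 2 ^ n ≤ z ∧ z < 2 ^ (n + 1) ∧ ∀ l : ℕ, Computes l z → B < l} =
        Set.Ico (2 ^ n) (2 ^ (n + 1)) \ easy := by
    ext z
    simp only [easy, computableWithin, Set.mem_sdiff, Set.mem_Ico, Set.mem_ofPred_eq, not_and,
      not_exists]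
    constructor
    · rintro ⟨h1, h2, h⟩
      exact ⟨⟨h1, h2⟩, fun _ _ l hl hc => (h l hc).not_ge hl⟩
    · rintro ⟨⟨h1, h2⟩, h⟩
      exact ⟨h1, h2, fun l hc => lt_of_not_ge fun hl => h h1 h2 l hl hc⟩
  refine ⟨h_easy, ?_⟩
  rw [h_hard, Set.cast_ncard_sdiff (fun z hz => Set.mem_Ico.mpr ⟨hz.1, hz.2.1⟩)
    (Set.finite_Ico _ _), ncard_Ico_two_pow, two_pow_mul_one_sub_rpow (by positivity)]
  push_cast
  linarith
end
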